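/- arXiv:math/0409556 — 4 statements merged into one kernel-verified Lean document; each statement's English description precedes it below -/
import Mathlib

section
/- For every s₀ > 0 there exists a sequence s_k → s₀ of positive reals such that for each k the group Γ(s_k) = ⟨g_{s_k}, t_1⟩ ⊆ Aff₊(ℝ) satisfies a relation that does not hold identically in s: there is a nontrivial word w_k in two symbols with w_k(g_{s_k}, t_1) = 1, while w_k(g_s, t_1) ≠ 1 for some s > 0. -/
/-!
If `s = p / q` is rational, then `g_s t_1^q g_s⁻¹ = t_{qs} = t_1^p`, so the word
`a b^q a⁻¹ b^{-p}` is a relation of `Γ(s)`; it fails at `s + 1`, since there it evaluates to the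
translation by `q ≠ 0`. Positive rationals accumulate at every `s₀ > 0`.
-/

/-- The scaling map `x ↦ s • x` of the real line, as a bijection of `ℝ`
(an element of `Aff₊(ℝ)` when `s > 0`); junk value (the identity) for `s = 0`. -/
noncomputable def affScale (s : ℝ) : Equiv.Perm ℝ :=
  if h : s ≠ 0 then Equiv.mulLeft₀ s h else 1

/-- The translation `x ↦ x + u` of the real line, as a bijection of `ℝ`
(an element of `Aff₊(ℝ)`). -/
def affTrans (u : ℝ) : Equiv.Perm ℝ :=
  Equiv.addLeft u

theorem affScale_apply {s : ℝ} (hs : s ≠ 0) (x : ℝ) : affScale s x = s * x := by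
  simp [affScale, hs]

theorem affScale_inv_apply {s : ℝ} (hs : s ≠ 0) (x : ℝ) : (affScale s)⁻¹ x = s⁻¹ * x := by
  simp [affScale, hs, Equiv.Perm.inv_def]

theorem affTrans_apply (u x : ℝ) : affTrans u x = u + x := rfl

theorem affTrans_mul (u v : ℝ) : affTrans u * affTrans v = affTrans (u + v) := by
  ext x
  simp [affTrans_apply, add_assoc]

theorem affTrans_zpow (u : ℝ) (n : ℤ) : affTrans u ^ n = affTrans (n * u) :=
  (Equiv.zsmul_addLeft u n).trans (congrArg affTrans (zsmul_eq_mul u n))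

theorem affTrans_eq_one_iff {u : ℝ} : affTrans u = 1 ↔ u = 0 := by
  refine ⟨fun h => by simpa [affTrans_apply] using congr($h 0), ?_⟩
  rintro rfl
  ext x
  simp [affTrans_apply]

theorem affScale_mul_affTrans_mul_inv {s : ℝ} (hs : s ≠ 0) (u : ℝ) :
    affScale s * affTrans u * (affScale s)⁻¹ = affTrans (s * u) := by
  ext x
  simp only [Equiv.Perm.mul_apply, affScale_inv_apply hs, affTrans_apply, affScale_apply hs]
  field_simp

def conjRelator (p q : ℤ) : FreeGroup (Fin 2) :=
  .of 0 * .of 1 ^ q * (.of 0)⁻¹ * .of 1 ^ (-p)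

theorem lift_conjRelator {s : ℝ} (hs : s ≠ 0) (p q : ℤ) :
    FreeGroup.lift ![affScale s, affTrans 1] (conjRelator p q) = affTrans (q * s - p) := by
  simp only [conjRelator, map_mul, map_zpow, map_inv, FreeGroup.lift_apply_of,
    Matrix.cons_val_zero, Matrix.cons_val_one, affTrans_zpow,
    affScale_mul_affTrans_mul_inv hs, affTrans_mul]
  congr 1
  push_cast
  ring

theorem lift_conjRelator_eq_one_iff {s : ℝ} (hs : s ≠ 0) (p q : ℤ) :
    FreeGroup.lift ![affScale s, affTrans 1] (conjRelator p q) = 1 ↔ q * s = p := by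
  rw [lift_conjRelator hs, affTrans_eq_one_iff, sub_eq_zero]

theorem exists_nonidentical_relation_of_rat {r : ℚ} (hr : 0 < r) :
    ∃ w : FreeGroup (Fin 2), w ≠ 1 ∧
      FreeGroup.lift ![affScale r, affTrans 1] w = 1 ∧
      ∃ s : ℝ, 0 < s ∧ FreeGroup.lift ![affScale s, affTrans 1] w ≠ 1 := by
  have hr' : (0 : ℝ) < r := Rat.cast_pos.mpr hr
  have hden : (r.den : ℝ) * r = r.num := by
    rw [mul_comm]
    exact_mod_cast Rat.mul_den_eq_num r
  have hfails : FreeGroup.lift ![affScale (r + 1), affTrans 1] (conjRelator r.num r.den) ≠ 1 := by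
    rw [Ne, lift_conjRelator_eq_one_iff (by positivity), Int.cast_natCast, mul_add_one, hden,
      add_eq_left]
    exact_mod_cast r.den_ne_zero
  refine ⟨conjRelator r.num r.den, fun hw => hfails (by rw [hw, map_one]), ?_,
    r + 1, by positivity, hfails⟩
  rwa [lift_conjRelator_eq_one_iff hr'.ne', Int.cast_natCast]

/-- For every `s₀ > 0` there exists a sequence `s_k → s₀` of positive
reals such that each group `Γ(s_k) = ⟨g_{s_k}, t_1⟩ ⊆ Aff₊(ℝ)` satisfies a relation that
does not hold identically in `s`: there are nontrivial words `w_k` in two symbols with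
`w_k(g_{s_k}, t_1) = 1`, while `w_k(g_s, t_1) ≠ 1` for some `s > 0`. -/
theorem statement7 (s₀ : ℝ) (hs₀ : 0 < s₀) :
    ∃ (sk : ℕ → ℝ) (w : ℕ → FreeGroup (Fin 2)),
      (∀ k, 0 < sk k) ∧
      Filter.Tendsto sk Filter.atTop (nhds s₀) ∧
      ∀ k, w k ≠ 1 ∧
        FreeGroup.lift ![affScale (sk k), affTrans 1] (w k) = 1 ∧
        ∃ s : ℝ, 0 < s ∧ FreeGroup.lift ![affScale s, affTrans 1] (w k) ≠ 1 := by
  obtain ⟨r, -, hr_gt, hr_lim⟩ := Real.exists_seq_rat_strictAnti_tendsto s₀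
  have hr_pos : ∀ k, (0 : ℝ) < r k := fun k => hs₀.trans (hr_gt k)
  choose w hw using fun k => exists_nonidentical_relation_of_rat (Rat.cast_pos.mp (hr_pos k))
  exact ⟨fun k => r k, w, hr_pos, hr_lim, hw⟩
end

section
/- Let G be a semisimple Lie group, n = dim G, and let A = (A_1, …, A_M) ∈ G^M be an irrational M-tuple. Then for g, h ∈ G one has gAg^{-1} = hAh^{-1} (componentwise simultaneous conjugation) if and only if g^{-1}h lies in the center of G; consequently the joint conjugacy class Conj(A) is bijectively and analytically parametrized by the quotient of G by its center. The space of conjugacy classes of all irrational M-tuples is an analytic manifold of dimension (M−1)n, and the map (a_1, …, a_M) ↦ Conj(a_1, …, a_M) is a local submersion at every irrational M-tuple. -/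
/-!
The conjugates `g A g⁻¹` and `h A h⁻¹` agree exactly when `g⁻¹ h` centralizes the `A i`, hence the
subgroup they generate. In a Hausdorff group centralizers are closed, so an element centralizing a
dense subgroup is central. The orbit map `g ↦ g A g⁻¹` therefore has the cosets of the center as
its fibres and descends to a bijection from `G ⧸ Z(G)` onto `Conj(A)`.
-/

theorem Set.centralizer_eq_center_of_dense {M : Type*} [Semigroup M] [TopologicalSpace M]
    [SeparatelyContinuousMul M] [T2Space M] {s : Set M} (hs : Dense s) :
    s.centralizer = Set.center M := by
  refine Set.Subset.antisymm (fun c hc => Semigroup.mem_center_iff.mpr fun x => ?_)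
    (Set.center_subset_centralizer s)
  have hsc : s ⊆ Set.centralizer {c} := fun y hy c' hc' => by
    rw [Set.mem_singleton_iff.mp hc']
    exact (hc y hy).symm
  have hx : x ∈ Set.centralizer {c} :=
    (Set.isClosed_centralizer {c}).closure_subset_iff.mpr hsc (hs.closure_eq ▸ Set.mem_univ x)
  exact (hx c rfl).symm

theorem Subgroup.centralizer_eq_center_of_dense_closure {G : Type*} [Group G]
    [TopologicalSpace G] [SeparatelyContinuousMul G] [T2Space G] {s : Set G}
    (hs : Dense (closure s : Set G)) : centralizer s = center G := by
  rw [← centralizer_closure]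
  exact SetLike.coe_injective (Set.centralizer_eq_center_of_dense hs)

theorem conj_eq_conj_iff_inv_mul_mem_centralizer {G ι : Type*} [Group G] (A : ι → G) (g h : G) :
    (∀ i, g * A i * g⁻¹ = h * A i * h⁻¹) ↔ g⁻¹ * h ∈ Subgroup.centralizer (Set.range A) := by
  simp only [Subgroup.mem_centralizer_iff, Set.forall_mem_range]
  refine forall_congr' fun i => ?_
  rw [← mul_left_cancel_iff (a := g⁻¹), ← mul_right_cancel_iff (a := h)]
  simp only [mul_assoc, inv_mul_cancel_left, inv_mul_cancel, mul_one]

noncomputable def QuotientGroup.equivRangeOfFibers {G X : Type*} [Group G] (H : Subgroup G)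
    (f : G → X) (hf : ∀ a b, f a = f b ↔ a⁻¹ * b ∈ H) : G ⧸ H ≃ Set.range f :=
  (Quotient.congrRight fun a b => QuotientGroup.leftRel_apply.trans (hf a b).symm).trans
    (Setoid.quotientKerEquivRange f)

theorem statement8_general {G : Type*} [Group G] [TopologicalSpace G] [IsTopologicalGroup G]
    [T2Space G]
    (M : ℕ) (A : Fin M → G)
    (hirr : Dense ((Subgroup.closure (Set.range A) : Subgroup G) : Set G)) :
    (∀ g h : G,
      (∀ i, g * A i * g⁻¹ = h * A i * h⁻¹) ↔ g⁻¹ * h ∈ Subgroup.center G) ∧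
    ∃ e : (G ⧸ Subgroup.center G) ≃
        {x : Fin M → G // ∃ g : G, x = fun i => g * A i * g⁻¹},
      ∀ g : G, (e (QuotientGroup.mk g) : Fin M → G) = fun i => g * A i * g⁻¹ := by
  have hconj : ∀ g h : G,
      (∀ i, g * A i * g⁻¹ = h * A i * h⁻¹) ↔ g⁻¹ * h ∈ Subgroup.center G := by
    intro g h
    rw [conj_eq_conj_iff_inv_mul_mem_centralizer,
      Subgroup.centralizer_eq_center_of_dense_closure hirr]
  let orbit : G → Fin M → G := fun g i => g * A i * g⁻¹
  have hfib : ∀ a b, orbit a = orbit b ↔ a⁻¹ * b ∈ Subgroup.center G := fun a b =>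
    funext_iff.trans (hconj a b)
  refine ⟨hconj, (QuotientGroup.equivRangeOfFibers _ orbit hfib).trans
    (Equiv.subtypeEquivRight fun x => exists_congr fun g => eq_comm), fun g => rfl⟩

/-- core part. Let `G` be a semisimple Lie group (encoded as a Hausdorff
topological group in which every connected normal solvable subgroup is trivial), and let
`A = (A_1, …, A_M)` be an irrational `M`-tuple, i.e. one generating a dense subgroup.
Then for `g, h ∈ G` one has `g·A·g⁻¹ = h·A·h⁻¹` (simultaneous conjugation) iff `g⁻¹h`
lies in the center of `G`; consequently the joint conjugacy class `Conj(A)` is bijectively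
parametrized by the quotient of `G` by its center, via `gZ(G) ↦ g·A·g⁻¹`.
(The remaining clauses of the statement — analyticity of the parametrization, the space of
conjugacy classes of irrational `M`-tuples being an analytic manifold of dimension
`(M−1)·dim G`, and the conjugacy-class map being a local submersion — concern analytic
manifold structures on the space of conjugacy classes and are not formalized here.) -/
theorem statement8 {G : Type*} [Group G] [TopologicalSpace G] [IsTopologicalGroup G]
    [T2Space G]
    -- semisimplicity: no nontrivial connected normal solvable subgroup
    (hss : ∀ K : Subgroup G, K.Normal → IsConnected (K : Set G) → IsSolvable ↥K → K = ⊥)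
    (M : ℕ) (A : Fin M → G)
    (hirr : Dense ((Subgroup.closure (Set.range A) : Subgroup G) : Set G)) :
    (∀ g h : G,
      (∀ i, g * A i * g⁻¹ = h * A i * h⁻¹) ↔ g⁻¹ * h ∈ Subgroup.center G) ∧
    ∃ e : (G ⧸ Subgroup.center G) ≃
        {x : Fin M → G // ∃ g : G, x = fun i => g * A i * g⁻¹},
      ∀ g : G, (e (QuotientGroup.mk g) : Fin M → G) = fun i => g * A i * g⁻¹ :=
  statement8_general M A hirr
end

section
/- Let M, s ∈ ℕ and let γ_1, …, γ_s be nontrivial elements of the free group on M generators. Let η_1, η_2 be two noncommuting elements of this free group, and set η_0 = 1. Then there exists a collection of indices i(1), …, i(s) ∈ {0, 1, 2} such that, setting γ'_j = η_{i(j)}^{-1} γ_j for each j, the iterated commutator []_j = [ … [[γ'_1, γ'_2], γ'_3], …, γ'_j] is nontrivial for every j = 1, …, s. -/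
/-!
In a free group, commuting is transitive on nontrivial elements. Indeed, the centralizer of
`c ≠ 1` is free (Nielsen–Schreier) and has `c` in its center, while a nontrivial element
commuting with a generator `a` has a reduced word starting with `a` or `a⁻¹`, so a free group
with nontrivial center has at most one generator and is commutative. Consequently a nontrivial
`c` cannot commute with all of `γ`, `η₁⁻¹ γ`, `η₂⁻¹ γ`, since it would then commute with the
noncommuting `η₁` and `η₂`. This lets the indices be chosen greedily: once `[]_{j-1} ≠ 1`,
some choice of `γ'_j` does not commute with it, i.e. `[]_j ≠ 1`.
-/

/-- The iterated commutator `[ … [[a, b₁], b₂], …, bₖ]` of a starting element `a`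
with a list of further elements, where `[x,y] = x * y * x⁻¹ * y⁻¹`. -/
def iteratedCommutator {G : Type*} [Group G] : G → List G → G
  | a, [] => a
  | a, b :: l => iteratedCommutator (a * b * a⁻¹ * b⁻¹) l

/-- The iterated commutator of a list: `1` for the empty list, and
`[ … [[a₁, a₂], a₃], …, aₖ]` for a nonempty list `[a₁, …, aₖ]`. -/
def iteratedCommutatorList {G : Type*} [Group G] : List G → G
  | [] => 1
  | a :: l => iteratedCommutator a l

namespace FreeGroup

variable {α : Type*}

theorem fst_eq_of_toWord_head?_eq_of_commute_of [DecidableEq α] {z : FreeGroup α} {a : α}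
    {p : α × Bool} (hp : z.toWord.head? = some p) (h : Commute z (of a)) : p.1 = a := by
  by_contra hpa
  obtain ⟨w, hw⟩ : ∃ w, z.toWord = p :: w := List.head?_eq_some_iff.mp hp
  have hleft : (of a * z).toWord = (a, true) :: z.toWord := by
    rw [toWord_mul, toWord_of]
    refine IsReduced.reduce_eq ?_
    rw [hw, List.singleton_append, isReduced_cons_cons]
    exact ⟨fun h => absurd h.symm hpa, hw ▸ isReduced_toWord⟩
  -- the reduced word of `z * of a = of a * z` is a sublist of `w ++ [(a, true)]` of full length
  have hright := toWord_mul_sublist z (of a)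
  rw [h.eq, hleft, toWord_of] at hright
  have hhead := congrArg List.head? (hright.eq_of_length (by simp))
  simp only [hw, List.head?_cons, List.cons_append, Option.some.injEq] at hhead
  exact hpa (congrArg Prod.fst hhead).symm

theorem eq_one_of_commute_of_of {z : FreeGroup α} {a b : α} (hab : a ≠ b)
    (ha : Commute z (of a)) (hb : Commute z (of b)) : z = 1 := by
  classical
  by_contra hz
  obtain ⟨p, hp⟩ := Option.ne_none_iff_exists'.mp
    (mt List.head?_eq_none_iff.mp (mt toWord_eq_nil_iff.mp hz))
  exact hab ((fst_eq_of_toWord_head?_eq_of_commute_of hp ha).symm.trans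
    (fst_eq_of_toWord_head?_eq_of_commute_of hp hb))

theorem commute_of_subsingleton [Subsingleton α] (x y : FreeGroup α) : Commute x y := by
  cases isEmpty_or_nonempty α with
  | inl _ => exact Subsingleton.elim _ _
  | inr h =>
    have := uniqueOfSubsingleton h.some
    exact IsCyclic.commGroup.mul_comm x y

theorem commute_of_ne_one_of_forall_commute {z : FreeGroup α} (hz : z ≠ 1)
    (hcen : ∀ g, Commute z g) (x y : FreeGroup α) : Commute x y :=
  have : Subsingleton α :=
    ⟨fun _ _ => by_contra fun hab => hz (eq_one_of_commute_of_of hab (hcen _) (hcen _))⟩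
  commute_of_subsingleton x y

end FreeGroup

namespace IsFreeGroup

variable {G : Type*} [Group G] [IsFreeGroup G]

theorem commute_of_commute_of_commute {c u v : G} (hc : c ≠ 1) (hu : Commute c u)
    (hv : Commute c v) : Commute u v := by
  let H := Subgroup.centralizer {c}
  have mem : ∀ {x}, Commute c x → x ∈ H := fun hx =>
    Subgroup.mem_centralizer_singleton_iff.mpr hx.eq.symm
  let e := toFreeGroup H
  have hcomm : Commute (e ⟨u, mem hu⟩) (e ⟨v, mem hv⟩) := by
    refine FreeGroup.commute_of_ne_one_of_forall_commute (z := e ⟨c, mem (.refl c)⟩) ?_ ?_ _ _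
    · simpa [Subgroup.mk_eq_one] using hc
    · intro g
      rw [← e.apply_symm_apply g]
      have hcg : Commute (⟨c, mem (.refl c)⟩ : H) (e.symm g) :=
        Subtype.ext (Subgroup.mem_centralizer_singleton_iff.mp (e.symm g).2).symm
      exact hcg.map e
  simpa using hcomm.map (H.subtype.comp e.symm.toMonoidHom)

theorem exists_not_commute_inv_mul {c η₁ η₂ : G} (hc : c ≠ 1) (hη : ¬Commute η₁ η₂) (g : G) :
    ∃ t : Fin 3, ¬Commute c ((![1, η₁, η₂] t)⁻¹ * g) := by
  by_contra! h
  have hg : Commute c g := by simpa using h 0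
  have of_inv_mul : ∀ η, Commute c (η⁻¹ * g) → Commute c η := fun η hη => by
    simpa using (hη.mul_right hg.inv_right).inv_right
  exact hη (commute_of_commute_of_commute hc (of_inv_mul _ (h 1)) (of_inv_mul _ (h 2)))

end IsFreeGroup

section IteratedCommutator

open scoped commutatorElement

variable {G : Type*} [Group G]

theorem iteratedCommutator_append_singleton (a : G) (l : List G) (x : G) :
    iteratedCommutator a (l ++ [x]) = ⁅iteratedCommutator a l, x⁆ := by
  induction l generalizing a with
  | nil => rfl
  | cons b l ih => exact ih _

theorem iteratedCommutatorList_append_singleton {l : List G} (hl : l ≠ []) (x : G) :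
    iteratedCommutatorList (l ++ [x]) = ⁅iteratedCommutatorList l, x⁆ := by
  cases l with
  | nil => exact absurd rfl hl
  | cons a l => exact iteratedCommutator_append_singleton a l x

theorem exists_forall_prefix_iteratedCommutatorList_ne_one {κ : Type*} {s : ℕ}
    (x : Fin s → κ → G) (hstart : ∀ k, ∃ t, x k t ≠ 1)
    (hstep : ∀ c : G, c ≠ 1 → ∀ k, ∃ t, ¬Commute c (x k t)) :
    ∃ i : Fin s → κ, ∀ l, l <+: List.ofFn (fun k => x k (i k)) → l ≠ [] →
      iteratedCommutatorList l ≠ 1 := by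
  induction s with
  | zero => exact ⟨Fin.elim0, fun l hl hne => absurd (by simpa using hl) hne⟩
  | succ s ih =>
    obtain ⟨i, hi⟩ := ih (fun k => x k.castSucc) (fun k => hstart _) (fun c hc k => hstep c hc _)
    set L := List.ofFn fun k => x k.castSucc (i k)
    obtain ⟨t, ht⟩ : ∃ t, iteratedCommutatorList (L ++ [x (Fin.last s) t]) ≠ 1 := by
      rcases eq_or_ne L [] with hL | hL
      · simpa [hL, iteratedCommutatorList, iteratedCommutator] using hstart (Fin.last s)
      · obtain ⟨t, ht⟩ := hstep _ (hi L (List.prefix_refl L) hL) (Fin.last s)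
        exact ⟨t, by rwa [iteratedCommutatorList_append_singleton hL, Ne,
          commutatorElement_eq_one_iff_commute]⟩
    refine ⟨Fin.snoc i t, fun l hl hne => ?_⟩
    rw [List.ofFn_succ'] at hl
    simp only [Fin.snoc_castSucc, Fin.snoc_last, List.concat_eq_append] at hl
    rcases List.prefix_concat_iff.mp hl with rfl | hl
    · exact ht
    · exact hi l hl hne

end IteratedCommutator

/-- Let `γ_1, …, γ_s` be nontrivial elements of the free group on `M`
generators, and let `η₁, η₂` be two noncommuting elements of this free group, `η₀ = 1`.
Then there are indices `i(1), …, i(s) ∈ {0,1,2}` such that, setting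
`γ'_j = η_{i(j)}⁻¹ * γ_j`, every iterated commutator
`[ … [[γ'_1, γ'_2], γ'_3], …, γ'_j]` (for `j = 1, …, s`) is nontrivial. -/
theorem statement18 (M s : ℕ) (γ : Fin s → FreeGroup (Fin M)) (hγ : ∀ j, γ j ≠ 1)
    (η₁ η₂ : FreeGroup (Fin M)) (hη : η₁ * η₂ ≠ η₂ * η₁) :
    ∃ i : Fin s → Fin 3,
      ∀ j : Fin s,
        iteratedCommutatorList
          ((List.ofFn (fun k : Fin s => (![1, η₁, η₂] (i k))⁻¹ * γ k)).take (j.1 + 1)) ≠ 1 := by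
  obtain ⟨i, hi⟩ := exists_forall_prefix_iteratedCommutatorList_ne_one
    (fun k t => (![1, η₁, η₂] t)⁻¹ * γ k) (fun k => ⟨0, by simpa using hγ k⟩)
    (fun c hc k => IsFreeGroup.exists_not_commute_inv_mul hc hη (γ k))
  exact ⟨i, fun j => hi _ (List.take_prefix _ _) (by simpa using j.pos.ne')⟩
end

section
/- Let G be a nonsolvable Lie group, H ⊆ G its maximal connected normal solvable Lie subgroup, and let s be the length of the derived series of H, i.e., H^{(0)} = H, H^{(i+1)} = [H^{(i)}, H^{(i)}], H^{(s)} = 1 and H^{(s−1)} ≠ 1. For any nontrivial word w(a,b) in two symbols and any elements Ã, B̃ ∈ G with w(Ã,B̃) ∈ H, there exists a nontrivial word w̃(a,b) with |w̃| ≤ 4^{s+1}|w| such that w̃(Ã,B̃) = 1. -/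
/-!
If a word `w` evaluates into a normal subgroup `K`, so does `t w t⁻¹` for a generator `t`, hence
`⁅w, t w t⁻¹⁆` evaluates into `⁅K, K⁆`, and this commutator has length at most `4|w| + 4`.
It is nontrivial for `t = a` or `t = b`: commuting elements of a free group are powers of a common
element, and `c ^ n` is conjugate to `c ^ m` only if `|m| = |n|`, because the length of `c ^ k`
grows linearly in `|k|` up to a bounded error. So if `w` commuted with both conjugates, `a` or `a²`
and `b` or `b²` would commute with `w`, which the exponent sum in `a` rules out. Running down the
derived series of `H` for `s` steps lands in `H⁽ˢ⁾ = 1`.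
-/

/-- Evaluation of a word in two symbols (an element of the free group on two generators)
at a pair of elements of a group `G`. -/
noncomputable def wordEval {G : Type*} [Group G] (A B : G) (w : FreeGroup (Fin 2)) : G :=
  FreeGroup.lift ![A, B] w

/-- The length of a word in two symbols: the length of its reduced expression in the
generators and their inverses. -/
def wordLength (w : FreeGroup (Fin 2)) : ℕ :=
  w.toWord.length

open scoped commutatorElement

namespace FreeGroup

variable {α : Type*}

theorem not_commute_of_ne {i j : α} (hij : i ≠ j) : ¬Commute (of i) (of j) := by
  classical
  intro h
  simpa [of, mul_mk, reduce, hij] using congrArg toWord h.eq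

theorem isCyclic_of_subsingleton [Subsingleton α] : IsCyclic (FreeGroup α) := by
  cases isEmpty_or_nonempty α
  · infer_instance
  · have := uniqueOfSubsingleton (Classical.arbitrary α)
    infer_instance

end FreeGroup

theorem IsFreeGroup.isCyclic_of_isMulCommutative (G : Type*) [Group G] [IsFreeGroup G]
    [IsMulCommutative G] : IsCyclic G := by
  have : Subsingleton (Generators G) := by
    refine ⟨fun i j => by_contra fun hij => FreeGroup.not_commute_of_ne hij ?_⟩
    apply (mulEquiv G).injective
    simp only [map_mul]
    exact mul_comm' _ _
  have := FreeGroup.isCyclic_of_subsingleton (α := Generators G)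
  exact isCyclic_of_surjective (mulEquiv G) (mulEquiv G).surjective

namespace FreeGroup

variable {α : Type*}

theorem exists_zpow_eq_of_commute {x y : FreeGroup α} (h : Commute x y) :
    ∃ (c : FreeGroup α) (i j : ℤ), x = c ^ i ∧ y = c ^ j := by
  let K := Subgroup.closure {x, y}
  have : IsMulCommutative K := Subgroup.isMulCommutative_closure <| by
    rintro _ (rfl | rfl) _ (rfl | rfl)
    exacts [rfl, h.eq, h.symm.eq, rfl]
  have := IsFreeGroup.isCyclic_of_isMulCommutative K
  obtain ⟨g, hg⟩ := IsCyclic.exists_generator (α := K)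
  obtain ⟨i, hi⟩ := Subgroup.mem_zpowers_iff.mp (hg ⟨x, Subgroup.subset_closure (by simp)⟩)
  obtain ⟨j, hj⟩ := Subgroup.mem_zpowers_iff.mp (hg ⟨y, Subgroup.subset_closure (by simp)⟩)
  exact ⟨g, i, j, by simpa using (congrArg Subtype.val hi).symm,
    by simpa using (congrArg Subtype.val hj).symm⟩

theorem eq_one_of_commute_of_commute {M : Type*} [Group M] [IsMulTorsionFree M]
    (φ : FreeGroup α →* M) {u p q : FreeGroup α} (hp : Commute u p) (hq : Commute u q)
    (hφp : φ p ≠ 1) (hq1 : q ≠ 1) (hφq : φ q = 1) : u = 1 := by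
  obtain ⟨d, k, l, rfl, rfl⟩ := exists_zpow_eq_of_commute hq
  have hl : l ≠ 0 := by rintro rfl; simp at hq1
  have hφd : φ d = 1 := by
    rwa [map_zpow, IsMulTorsionFree.zpow_eq_one_iff_left hl] at hφq
  obtain ⟨c, i, j, hu, rfl⟩ := exists_zpow_eq_of_commute hp
  have hφc : φ c ≠ 1 := by rintro h; simp [h] at hφp
  have : φ c ^ i = 1 := by rw [← map_zpow, ← hu, map_zpow, hφd, one_zpow]
  rw [hu, (IsMulTorsionFree.zpow_eq_one_iff_right hφc).mp this, zpow_zero]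

section Norm

variable [DecidableEq α]

theorem norm_pow_of_ne_zero (x : FreeGroup α) {n : ℕ} (hn : n ≠ 0) :
    norm (x ^ n) = 2 * (reduceCyclically.conjugator x.toWord).length +
      n * (reduceCyclically x.toWord).length := by
  simp only [norm, toWord_pow, isReduced_toWord, reduceCyclically.reduce_flatten_replicate, hn,
    ↓reduceIte, List.append_assoc, List.length_append, List.length_flatten, List.map_replicate,
    List.sum_replicate, smul_eq_mul, invRev_length]
  ring

theorem norm_zpow_of_ne_zero (x : FreeGroup α) {n : ℤ} (hn : n ≠ 0) :
    norm (x ^ n) = 2 * (reduceCyclically.conjugator x.toWord).length +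
      n.natAbs * (reduceCyclically x.toWord).length := by
  rcases Int.natAbs_eq n with h | h <;> rw [h] at hn ⊢
  · rw [zpow_natCast, norm_pow_of_ne_zero x (by omega), Int.natAbs_natCast]
  · rw [zpow_neg, zpow_natCast, norm_inv_eq, norm_pow_of_ne_zero x (by omega), Int.natAbs_neg,
      Int.natAbs_natCast]

theorem reduceCyclically_toWord_ne_nil {x : FreeGroup α} (hx : x ≠ 1) :
    reduceCyclically x.toWord ≠ [] := by
  intro h
  apply hx
  have := congrArg mk (reduceCyclically.conj_conjugator_reduceCyclically x.toWord)
  rw [h, List.append_nil, ← mul_mk, ← inv_mk, mul_inv_cancel, mk_toWord] at this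
  exact this.symm

theorem norm_conj_le (t u : FreeGroup α) : norm (t * u * t⁻¹) ≤ norm u + 2 * norm t := by
  have := norm_mul_le (t * u) t⁻¹
  have := norm_mul_le t u
  rw [norm_inv_eq] at *
  omega

theorem norm_commutatorElement_le (a b : FreeGroup α) :
    norm ⁅a, b⁆ ≤ 2 * norm a + 2 * norm b := by
  rw [commutatorElement_def]
  have := norm_mul_le (a * b * a⁻¹) b⁻¹
  have := norm_conj_le a b
  rw [norm_inv_eq] at *
  omega

end Norm

theorem natAbs_le_of_conj_zpow_eq {c y : FreeGroup α} (hc : c ≠ 1) {m n : ℤ}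
    (h : y * c ^ n * y⁻¹ = c ^ m) : m.natAbs ≤ n.natAbs := by
  classical
  set a := 2 * (reduceCyclically.conjugator c.toWord).length
  set b := (reduceCyclically c.toWord).length
  have hb : 0 < b := List.length_pos_iff.mpr (reduceCyclically_toWord_ne_nil hc)
  by_contra! hmn
  have hm : m ≠ 0 := by omega
  -- `k` is so large that the error `2 * norm y` of conjugation cannot absorb `k * b`.
  set k := a + 2 * norm y + 1 with hk
  have hconj : y * c ^ (n * k) * y⁻¹ = c ^ (m * k) := by
    simp only [zpow_mul, ← h, ← MulAut.conj_apply, map_zpow]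
  have hupper : norm (c ^ (n * k)) ≤ a + n.natAbs * k * b := by
    rcases eq_or_ne n 0 with rfl | hn
    · simp
    · rw [norm_zpow_of_ne_zero c (by positivity), Int.natAbs_mul, Int.natAbs_natCast]
  have hlower : norm (c ^ (m * k)) = a + m.natAbs * k * b := by
    rw [norm_zpow_of_ne_zero c (by positivity), Int.natAbs_mul, Int.natAbs_natCast]
  have := norm_conj_le y (c ^ (n * k))
  rw [hconj] at this
  have h1 : (n.natAbs + 1) * k * b ≤ m.natAbs * k * b := by gcongr; omega
  have h2 : k ≤ k * b := Nat.le_mul_of_pos_right k hb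
  rw [add_mul, add_mul, one_mul] at h1
  linarith

theorem natAbs_eq_of_conj_zpow_eq {c y : FreeGroup α} (hc : c ≠ 1) {m n : ℤ}
    (h : y * c ^ n * y⁻¹ = c ^ m) : m.natAbs = n.natAbs :=
  le_antisymm (natAbs_le_of_conj_zpow_eq hc h)
    (natAbs_le_of_conj_zpow_eq hc (y := y⁻¹) (by rw [← h]; group))

theorem commute_or_commute_sq_of_commute_conj {u t : FreeGroup α}
    (h : Commute u (t * u * t⁻¹)) : Commute u t ∨ Commute u (t ^ 2) := by
  obtain ⟨c, i, j, rfl, hj⟩ := exists_zpow_eq_of_commute h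
  rcases eq_or_ne c 1 with rfl | hc
  · simp
  rcases Int.natAbs_eq_natAbs_iff.mp (natAbs_eq_of_conj_zpow_eq hc hj) with rfl | rfl
  · exact .inl (mul_inv_eq_iff_eq_mul.mp hj).symm
  · rw [zpow_neg] at hj
    have hsq : t ^ 2 * c ^ i * (t ^ 2)⁻¹ = c ^ i :=
      calc t ^ 2 * c ^ i * (t ^ 2)⁻¹ = t * (t * c ^ i * t⁻¹) * t⁻¹ := by
            simp only [sq, mul_inv_rev, mul_assoc]
        _ = t * (c ^ i)⁻¹ * t⁻¹ := by rw [hj]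
        _ = (t * c ^ i * t⁻¹)⁻¹ := by group
        _ = c ^ i := by rw [hj, inv_inv]
    exact .inr (mul_inv_eq_iff_eq_mul.mp hsq).symm

theorem eq_one_of_commute_conj_of_commute_conj {i j : α} (hij : i ≠ j) {u : FreeGroup α}
    (hi : Commute u (of i * u * (of i)⁻¹)) (hj : Commute u (of j * u * (of j)⁻¹)) : u = 1 := by
  classical
  let φ : FreeGroup α →* Multiplicative ℤ :=
    FreeGroup.lift fun k => if k = i then Multiplicative.ofAdd 1 else 1
  obtain ⟨p, hup, hp⟩ : ∃ p, Commute u p ∧ φ p ≠ 1 := by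
    rcases commute_or_commute_sq_of_commute_conj hi with h | h
    · exact ⟨_, h, by simp [φ]⟩
    · exact ⟨_, h, by simp [φ]⟩
  obtain ⟨q, huq, hq1, hq⟩ : ∃ q, Commute u q ∧ q ≠ 1 ∧ φ q = 1 := by
    rcases commute_or_commute_sq_of_commute_conj hj with h | h
    · exact ⟨_, h, of_ne_one j, by simp [φ, hij.symm]⟩
    · exact ⟨_, h, by simp [of_ne_one], by simp [φ, hij.symm]⟩
  exact eq_one_of_commute_of_commute φ hup huq hp hq1 hq

end FreeGroup

theorem Subgroup.Normal.map_subtype_of_characteristic {G : Type*} [Group G] {H : Subgroup G}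
    (hH : H.Normal) (K : Subgroup H) [hK : K.Characteristic] : (K.map H.subtype).Normal := by
  refine ⟨?_⟩
  rintro _ ⟨k, hk, rfl⟩ g
  exact ⟨MulAut.conjNormal g k, characteristic_iff_le_comap.mp hK (MulAut.conjNormal g) hk,
    MulAut.conjNormal_apply g k⟩

section WordDescent

open FreeGroup

variable {α G : Type*} [DecidableEq α] [Nontrivial α] [Group G] (f : FreeGroup α →* G)

theorem exists_ne_one_norm_le_mem_commutator {K : Subgroup G} [K.Normal] {v : FreeGroup α}
    (hv : v ≠ 1) (hvK : f v ∈ K) :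
    ∃ v' : FreeGroup α, v' ≠ 1 ∧ norm v' ≤ 4 * norm v + 4 ∧ f v' ∈ ⁅K, K⁆ := by
  obtain ⟨i, j, hij⟩ := exists_pair_ne α
  obtain ⟨t, ht, hne⟩ : ∃ t : FreeGroup α, norm t = 1 ∧ ⁅v, t * v * t⁻¹⁆ ≠ 1 := by
    by_contra! h
    simp only [commutatorElement_eq_one_iff_commute] at h
    exact hv (eq_one_of_commute_conj_of_commute_conj hij (h _ (norm_of i)) (h _ (norm_of j)))
  refine ⟨_, hne, ?_, ?_⟩
  · have := norm_commutatorElement_le v (t * v * t⁻¹)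
    have := norm_conj_le t v
    omega
  · rw [map_commutatorElement]
    refine Subgroup.commutator_mem_commutator hvK ?_
    simpa using Subgroup.Normal.conj_mem ‹_› _ hvK (f t)

theorem exists_ne_one_norm_le_mem_map_derivedSeries {H : Subgroup G} (hH : H.Normal) (n : ℕ)
    {v : FreeGroup α} (hv : v ≠ 1) (hvH : f v ∈ H) :
    ∃ v' : FreeGroup α, v' ≠ 1 ∧ norm v' + 2 ≤ 4 ^ n * (norm v + 2) ∧
      f v' ∈ (derivedSeries H n).map H.subtype := by
  induction n with
  | zero => exact ⟨v, hv, by simp, by simpa using hvH⟩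
  | succ n ih =>
    obtain ⟨u, hu, hu_norm, huH⟩ := ih
    have := hH.map_subtype_of_characteristic (derivedSeries H n)
    obtain ⟨v', hv', hv'_norm, hv'H⟩ := exists_ne_one_norm_le_mem_commutator f hu huH
    refine ⟨v', hv', ?_, ?_⟩
    · rw [pow_succ]
      nlinarith
    · rwa [derivedSeries_succ, Subgroup.map_commutator]

end WordDescent

theorem statement19_general {G : Type*} [Group G]
    (H : Subgroup G) (hnormal : H.Normal)
    (s : ℕ) (hs : derivedSeries ↥H s = ⊥)
    (w : FreeGroup (Fin 2)) (hw : w ≠ 1) (A B : G) (hmem : wordEval A B w ∈ H) :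
    ∃ w' : FreeGroup (Fin 2), w' ≠ 1 ∧ wordLength w' ≤ 4 ^ (s + 1) * wordLength w ∧
      wordEval A B w' = 1 := by
  obtain ⟨v, hv, hv_norm, hvH⟩ :=
    exists_ne_one_norm_le_mem_map_derivedSeries (FreeGroup.lift ![A, B]) hnormal s hw hmem
  rw [hs, Subgroup.map_bot, Subgroup.mem_bot] at hvH
  refine ⟨v, hv, ?_, hvH⟩
  have hw_pos : 0 < FreeGroup.norm w := Nat.pos_of_ne_zero (FreeGroup.norm_eq_zero.not.mpr hw)
  show FreeGroup.norm v ≤ 4 ^ (s + 1) * FreeGroup.norm w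
  rw [pow_succ]
  nlinarith [Nat.one_le_pow s 4 (by norm_num)]

/-- Let `G` be a nonsolvable Lie group (here: a topological group that is
not solvable), `H ⊆ G` its maximal connected normal solvable subgroup, and let `s` be the
length of the derived series of `H` (so `H⁽ˢ⁾ = 1` and `H⁽ˢ⁻¹⁾ ≠ 1`). Then for any
nontrivial word `w` in two symbols and any `Ã, B̃ ∈ G` with `w(Ã,B̃) ∈ H`, there is a
nontrivial word `w̃` with `|w̃| ≤ 4^(s+1) * |w|` and `w̃(Ã,B̃) = 1`. -/
theorem statement19 {G : Type*} [Group G] [TopologicalSpace G] [IsTopologicalGroup G]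
    (hG : ¬ IsSolvable G)
    (H : Subgroup G) (hnormal : H.Normal) (hconn : IsConnected (H : Set G))
    (hsolv : IsSolvable ↥H)
    (hmax : ∀ K : Subgroup G, K.Normal → IsConnected (K : Set G) → IsSolvable ↥K → K ≤ H)
    (s : ℕ) (hs : derivedSeries ↥H s = ⊥) (hs' : 1 ≤ s → derivedSeries ↥H (s - 1) ≠ ⊥)
    (w : FreeGroup (Fin 2)) (hw : w ≠ 1) (A B : G) (hmem : wordEval A B w ∈ H) :
    ∃ w' : FreeGroup (Fin 2), w' ≠ 1 ∧ wordLength w' ≤ 4 ^ (s + 1) * wordLength w ∧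
      wordEval A B w' = 1 :=
  statement19_general H hnormal s hs w hw A B hmem
end
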